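/- arXiv:2301.12786 — 3 statements merged into one kernel-verified Lean document; each statement's English description precedes it below -/
import Mathlib

section
/- Let (B,d) be a metric space of finite diameter, let u : B → ℝ be a Lipschitz function with Lipschitz constant c₁, let 0 < θ ≤ 1 and let Λ : B → B be a map satisfying d(Λ(x),Λ(y)) ≤ c₂ · d(x,y)^θ for all x,y ∈ B. Let δ > 1 be a constant, and define v(x) := ∑_{n=0}^∞ δ^{-n} u(Λⁿ(x)) (the series converges absolutely since u is bounded on B). Then there exist constants γ > 0 and c > 0, depending only on c₁, c₂, θ, δ and the diameter of B, such that |v(x) − v(y)| ≤ c · (log*(d(x,y)))^{-γ} for all x, y ∈ B. -/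
open Real

set_option maxHeartbeats 1000000 in
lemma aux_real {θ K δ c₁ A : ℝ} (hθ0 : 0 < θ) (hθ1 : θ ≤ 1) (hK : 1 ≤ K)
    (hδ : 1 < δ) (hc₁ : 0 ≤ c₁) (hA : 0 < A) :
    ∃ γ > (0:ℝ), ∃ c > (0:ℝ), ∀ d : ℝ, 0 < d → d ≤ 1 → ∃ N : ℕ,
      (N : ℝ) * c₁ * K ^ N * d ^ (θ ^ N) + A * (δ ^ N)⁻¹
        ≤ c * (1 - Real.log d) ^ (-γ) := by
  have hδ0 : (0:ℝ) < δ := by linarith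
  have h2K0 : (0:ℝ) < 2 * K := by linarith
  have hlθ : Real.log θ ≤ 0 := Real.log_nonpos hθ0.le hθ1
  have h2K : (1:ℝ) < 2 * K := by linarith
  obtain ⟨s, hs, hs0⟩ : ∃ s : ℝ, Real.log θ = -s ∧ 0 ≤ s :=
    ⟨-Real.log θ, by ring, by linarith⟩
  obtain ⟨b, hbdef, hb0'⟩ : ∃ b : ℝ, b = Real.log (2 * K) ∧ 0 < b :=
    ⟨_, rfl, Real.log_pos h2K⟩
  obtain ⟨lδ, hlδdef, hlδ0⟩ : ∃ lδ : ℝ, lδ = Real.log δ ∧ 0 < lδ :=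
    ⟨_, rfl, Real.log_pos hδ⟩
  obtain ⟨ε, hε0, hεs, hεb, hεδ⟩ :
      ∃ ε : ℝ, 0 < ε ∧ ε * s ≤ 1 / 2 ∧ ε * b ≤ 1 / 4 ∧ ε * lδ ≤ 1 / 4 := by
    refine ⟨min (1 / (2 * (s + 1))) (1 / (4 * (b + lδ))), lt_min (by positivity) (by positivity),
      ?_, ?_, ?_⟩
    · have h1 : min (1 / (2 * (s + 1))) (1 / (4 * (b + lδ))) ≤ 1 / (2 * (s + 1)) :=
        min_le_left _ _
      have h3 : (1 / (2 * (s + 1))) * s ≤ 1 / 2 := by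
        rw [div_mul_eq_mul_div, div_le_iff₀ (by positivity)]; linarith
      exact le_trans (mul_le_mul_of_nonneg_right h1 hs0) h3
    · have h1 : min (1 / (2 * (s + 1))) (1 / (4 * (b + lδ))) ≤ 1 / (4 * (b + lδ)) :=
        min_le_right _ _
      have h3 : (1 / (4 * (b + lδ))) * b ≤ 1 / 4 := by
        rw [div_mul_eq_mul_div, div_le_iff₀ (by positivity)]; linarith
      exact le_trans (mul_le_mul_of_nonneg_right h1 hb0'.le) h3
    · have h1 : min (1 / (2 * (s + 1))) (1 / (4 * (b + lδ))) ≤ 1 / (4 * (b + lδ)) :=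
        min_le_right _ _
      have h3 : (1 / (4 * (b + lδ))) * lδ ≤ 1 / 4 := by
        rw [div_mul_eq_mul_div, div_le_iff₀ (by positivity)]; linarith
      exact le_trans (mul_le_mul_of_nonneg_right h1 hlδ0.le) h3
  refine ⟨ε * lδ, by positivity, c₁ * Real.exp (b + θ + 1 / θ) + A, by positivity,
    fun d hd0 hd1 => ?_⟩
  have hld : Real.log d ≤ 0 := Real.log_nonpos hd0.le hd1
  obtain ⟨t, htdef, ht1⟩ : ∃ t : ℝ, t = 1 - Real.log d ∧ 1 ≤ t := ⟨_, rfl, by linarith⟩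
  have ht0 : 0 < t := by linarith
  obtain ⟨L, hLdef, hL0⟩ : ∃ L : ℝ, L = Real.log t ∧ 0 ≤ L := ⟨_, rfl, Real.log_nonneg ht1⟩
  refine ⟨⌈ε * L⌉₊, ?_⟩
  obtain ⟨N, hNdef⟩ : ∃ N : ℕ, N = ⌈ε * L⌉₊ := ⟨_, rfl⟩
  rw [← hNdef, ← htdef]
  have hN1 : ε * L ≤ (N : ℝ) := hNdef ▸ Nat.le_ceil _
  have hN2 : (N : ℝ) ≤ ε * L + 1 := hNdef ▸ (Nat.ceil_lt_add_one (by positivity)).le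
  have htexp : t = Real.exp L := by rw [hLdef, Real.exp_log ht0]
  have htγ : t ^ (-(ε * lδ)) = Real.exp (-(ε * lδ) * L) := by
    rw [Real.rpow_def_of_pos ht0, ← hLdef, mul_comm]
  -- tail bound
  have htail : A * ((δ : ℝ) ^ N)⁻¹ ≤ A * t ^ (-(ε * lδ)) := by
    have h1 : (δ : ℝ) ^ N = Real.exp ((N : ℝ) * lδ) := by
      rw [hlδdef, ← Real.log_pow]
      exact (Real.exp_log (pow_pos hδ0 N)).symm
    rw [h1, ← Real.exp_neg, htγ]
    refine mul_le_mul_of_nonneg_left (Real.exp_le_exp.mpr ?_) hA.le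
    have u1 : (ε * L) * lδ ≤ (N : ℝ) * lδ := mul_le_mul_of_nonneg_right hN1 hlδ0.le
    linarith [u1]
  -- head bound
  have hhead : (N : ℝ) * c₁ * K ^ N * d ^ (θ ^ N)
      ≤ c₁ * Real.exp (b + θ + 1 / θ) * t ^ (-(ε * lδ)) := by
    have hNle2 : (N : ℝ) ≤ 2 ^ N := by exact_mod_cast (Nat.lt_two_pow_self (n := N)).le
    have hKN : (N : ℝ) * K ^ N ≤ (2 * K) ^ N := by
      rw [mul_pow]
      exact mul_le_mul_of_nonneg_right hNle2 (pow_nonneg (by linarith) N)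
    have h2KN : ((2 * K) ^ N : ℝ) = Real.exp ((N : ℝ) * b) := by
      rw [hbdef, ← Real.log_pow]
      exact (Real.exp_log (pow_pos h2K0 N)).symm
    have hdθ : d ^ (θ ^ N) = Real.exp (-(θ ^ N * (t - 1))) := by
      rw [Real.rpow_def_of_pos hd0]
      congr 1
      have h : t - 1 = -Real.log d := by rw [htdef]; ring
      rw [h]; ring
    have hθN : θ * Real.exp (-(L / 2)) ≤ θ ^ N := by
      have hθpow : (θ : ℝ) ^ N = Real.exp (-((N : ℝ) * s)) := by
        have h1 : Real.log (θ ^ N) = -((N : ℝ) * s) := by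
          rw [Real.log_pow, hs]; push_cast; ring
        rw [← h1, Real.exp_log (pow_pos hθ0 N)]
      rw [hθpow]
      have hlhs : θ * Real.exp (-(L / 2)) = Real.exp (-(s + L / 2)) := by
        nth_rewrite 1 [← Real.exp_log hθ0]
        rw [← Real.exp_add, hs]
        congr 1; ring
      rw [hlhs]
      apply Real.exp_le_exp.mpr
      have u1 : (N : ℝ) * s ≤ (ε * L + 1) * s := mul_le_mul_of_nonneg_right hN2 hs0
      have u2 : (ε * L + 1) * s = (ε * s) * L + s := by ring
      have u3 : (ε * s) * L ≤ (1 / 2) * L := mul_le_mul_of_nonneg_right hεs hL0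
      linarith
    obtain ⟨r, hrdef, hr0⟩ : ∃ r : ℝ, r = Real.exp (L / 4) ∧ 0 < r := ⟨_, rfl, Real.exp_pos _⟩
    have hr1 : L / 4 + 1 ≤ r := by
      rw [hrdef]; have := Real.add_one_le_exp (L / 4); linarith
    have hrsq : Real.exp (L / 2) = r * r := by
      rw [hrdef, ← Real.exp_add]; congr 1; ring
    have hemhalf : Real.exp (-(L / 2)) ≤ 1 := Real.exp_le_one_iff.mpr (by linarith)
    have hprod : θ * r * r - θ ≤ θ ^ N * (t - 1) := by
      have ht1' : 0 ≤ t - 1 := by linarith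
      have h1 : (θ * Real.exp (-(L / 2))) * (t - 1) ≤ θ ^ N * (t - 1) :=
        mul_le_mul_of_nonneg_right hθN ht1'
      have e1 : Real.exp (-(L / 2)) * Real.exp L = Real.exp (L / 2) := by
        rw [← Real.exp_add]; congr 1; ring
      have h2 : (θ * Real.exp (-(L / 2))) * (t - 1)
          = θ * r * r - θ * Real.exp (-(L / 2)) := by
        rw [htexp]
        linear_combination θ * e1 + θ * hrsq
      have h3 : θ * Real.exp (-(L / 2)) ≤ θ * 1 := mul_le_mul_of_nonneg_left hemhalf hθ0.le
      linarith [h1, h2, h3]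
    have hkey : (2 : ℝ) * r ≤ θ * r * r + 1 / θ := by
      have h : (θ * r - 1) ^ 2 / θ = θ * r * r + 1 / θ - 2 * r := by
        field_simp; ring
      linarith [h, div_nonneg (sq_nonneg (θ * r - 1)) hθ0.le]
    have hexp : (N : ℝ) * b - θ ^ N * (t - 1) ≤ b + θ + 1 / θ - ε * lδ * L := by
      have u1 : (N : ℝ) * b ≤ (ε * L + 1) * b := mul_le_mul_of_nonneg_right hN2 hb0'.le
      have u2 : (ε * L + 1) * b = (ε * b) * L + b := by ring
      have u3 : (ε * b) * L ≤ (1 / 4) * L := mul_le_mul_of_nonneg_right hεb hL0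
      have u4 : (ε * lδ) * L ≤ (1 / 4) * L := mul_le_mul_of_nonneg_right hεδ hL0
      have u5 : ε * lδ * L = (ε * lδ) * L := by ring
      linarith
    calc (N : ℝ) * c₁ * K ^ N * d ^ (θ ^ N)
        = c₁ * ((N : ℝ) * K ^ N) * d ^ (θ ^ N) := by ring
      _ ≤ c₁ * (2 * K) ^ N * d ^ (θ ^ N) :=
          mul_le_mul_of_nonneg_right (mul_le_mul_of_nonneg_left hKN hc₁)
            (Real.rpow_nonneg hd0.le _)
      _ = c₁ * Real.exp ((N : ℝ) * b - θ ^ N * (t - 1)) := by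
          rw [h2KN, hdθ, mul_assoc, ← Real.exp_add, ← sub_eq_add_neg]
      _ ≤ c₁ * Real.exp (b + θ + 1 / θ - ε * lδ * L) :=
          mul_le_mul_of_nonneg_left (Real.exp_le_exp.mpr hexp) hc₁
      _ = c₁ * Real.exp (b + θ + 1 / θ) * t ^ (-(ε * lδ)) := by
          rw [htγ, mul_assoc c₁, ← Real.exp_add]
          congr 1
          ring
  calc (N : ℝ) * c₁ * K ^ N * d ^ (θ ^ N) + A * ((δ : ℝ) ^ N)⁻¹
      ≤ c₁ * Real.exp (b + θ + 1 / θ) * t ^ (-(ε * lδ))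
        + A * t ^ (-(ε * lδ)) := add_le_add hhead htail
    _ = (c₁ * Real.exp (b + θ + 1 / θ) + A) * t ^ (-(ε * lδ)) := by ring

lemma iter_bound {B : Type*} [MetricSpace B] {θ K : ℝ} (hθ0 : 0 < θ) (hθ1 : θ ≤ 1)
    (hK : 1 ≤ K) {Λ : B → B} (hΛ : ∀ x y : B, dist (Λ x) (Λ y) ≤ K * dist x y ^ θ)
    (x y : B) : ∀ n : ℕ, dist (Λ^[n] x) (Λ^[n] y) ≤ K ^ n * dist x y ^ (θ ^ n) := by
  intro n
  have hK0 : (0:ℝ) < K := by linarith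
  have hd0 : (0:ℝ) ≤ dist x y := dist_nonneg
  induction n with
  | zero => simpa using le_of_eq (Real.rpow_one _).symm
  | succ n ih =>
    rw [Function.iterate_succ_apply', Function.iterate_succ_apply']
    have h0 : (0:ℝ) ≤ K ^ n := by positivity
    have h1 : dist (Λ (Λ^[n] x)) (Λ (Λ^[n] y)) ≤ K * dist (Λ^[n] x) (Λ^[n] y) ^ θ := hΛ _ _
    have h2 : dist (Λ^[n] x) (Λ^[n] y) ^ θ ≤ (K ^ n * dist x y ^ (θ ^ n)) ^ θ :=
      Real.rpow_le_rpow dist_nonneg ih hθ0.le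
    have h3 : ((K ^ n : ℝ) * dist x y ^ (θ ^ n)) ^ θ
        = ((K ^ n : ℝ)) ^ θ * dist x y ^ (θ ^ n * θ) := by
      rw [Real.mul_rpow h0 (Real.rpow_nonneg hd0 _), Real.rpow_mul hd0]
    have h4 : ((K ^ n : ℝ)) ^ θ ≤ K ^ n := by
      have hKn1 : (1:ℝ) ≤ K ^ n := one_le_pow₀ hK
      calc ((K ^ n : ℝ)) ^ θ ≤ ((K ^ n : ℝ)) ^ (1:ℝ) :=
            Real.rpow_le_rpow_of_exponent_le hKn1 hθ1
        _ = K ^ n := Real.rpow_one _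
    have h5 : dist x y ^ (θ ^ n * θ) = dist x y ^ (θ ^ (n + 1)) := by rw [← pow_succ]
    calc dist (Λ (Λ^[n] x)) (Λ (Λ^[n] y))
        ≤ K * dist (Λ^[n] x) (Λ^[n] y) ^ θ := h1
      _ ≤ K * ((K ^ n : ℝ) * dist x y ^ (θ ^ n)) ^ θ :=
          mul_le_mul_of_nonneg_left h2 hK0.le
      _ = K * (((K ^ n : ℝ)) ^ θ * dist x y ^ (θ ^ (n + 1))) := by rw [h3, h5]
      _ ≤ K * ((K ^ n : ℝ) * dist x y ^ (θ ^ (n + 1))) := by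
          refine mul_le_mul_of_nonneg_left
            (mul_le_mul_of_nonneg_right h4 (Real.rpow_nonneg hd0 _)) hK0.le
      _ = K ^ (n + 1) * dist x y ^ (θ ^ (n + 1)) := by ring

set_option maxHeartbeats 1000000 in
lemma tsum_split {δ M : ℝ} (hδ : 1 < δ) (hM0 : 0 ≤ M) (w : ℕ → ℝ)
    (hw : ∀ n, |w n| ≤ 2 * M * (δ⁻¹) ^ n) (N : ℕ) (Cb : ℝ)
    (hhead : ∀ n < N, |w n| ≤ Cb) :
    |∑' n, w n| ≤ (N : ℝ) * Cb + (2 * M / (1 - δ⁻¹)) * (δ ^ N)⁻¹ := by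
  have hδ0 : (0:ℝ) < δ := by linarith
  have hi0 : (0:ℝ) ≤ δ⁻¹ := by positivity
  have hi1 : δ⁻¹ < 1 := inv_lt_one_of_one_lt₀ hδ
  have hgeo : Summable (fun n : ℕ => (δ⁻¹) ^ n) := summable_geometric_of_lt_one hi0 hi1
  have hgeo2 : Summable (fun n : ℕ => 2 * M * (δ⁻¹) ^ n) := hgeo.mul_left _
  have hsw : Summable w := by
    apply Summable.of_norm_bounded hgeo2
    intro n; rw [Real.norm_eq_abs]; exact hw n
  have hsa : Summable (fun n => |w n|) := hsw.abs
  have habs : |∑' n, w n| ≤ ∑' n, |w n| := by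
    have := norm_tsum_le_tsum_norm (f := w) (by simpa [Real.norm_eq_abs] using hsa)
    simpa [Real.norm_eq_abs] using this
  have hsplit : (∑' n, |w n|)
      = (∑ n ∈ Finset.range N, |w n|) + ∑' n, |w (n + N)| := (Summable.sum_add_tsum_nat_add N hsa).symm
  have hheadsum : (∑ n ∈ Finset.range N, |w n|) ≤ (N : ℝ) * Cb := by
    calc (∑ n ∈ Finset.range N, |w n|) ≤ ∑ _n ∈ Finset.range N, Cb :=
          Finset.sum_le_sum (fun i hi => hhead i (Finset.mem_range.mp hi))
      _ = (N : ℝ) * Cb := by simp [Finset.sum_const, nsmul_eq_mul]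
  have htailsum : (∑' n, |w (n + N)|) ≤ (2 * M / (1 - δ⁻¹)) * (δ ^ N)⁻¹ := by
    have hs1 : Summable (fun n : ℕ => |w (n + N)|) := (summable_nat_add_iff (f := fun n => |w n|) N).mpr hsa
    have hs2 : Summable (fun n : ℕ => 2 * M * (δ⁻¹) ^ (n + N)) :=
      (summable_nat_add_iff (f := fun n : ℕ => 2 * M * (δ⁻¹) ^ n) N).mpr hgeo2
    have h1 : (∑' n, |w (n + N)|) ≤ ∑' n : ℕ, 2 * M * (δ⁻¹) ^ (n + N) :=
      Summable.tsum_le_tsum (fun n => hw (n + N)) hs1 hs2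
    have h2 : (∑' n : ℕ, 2 * M * (δ⁻¹) ^ (n + N))
        = (2 * M * (δ⁻¹) ^ N) * (1 - δ⁻¹)⁻¹ := by
      calc (∑' n : ℕ, 2 * M * (δ⁻¹) ^ (n + N))
          = ∑' n : ℕ, (2 * M * (δ⁻¹) ^ N) * (δ⁻¹) ^ n := by
            congr 1; funext n; rw [pow_add]; ring
        _ = (2 * M * (δ⁻¹) ^ N) * ∑' n : ℕ, (δ⁻¹) ^ n := tsum_mul_left
        _ = (2 * M * (δ⁻¹) ^ N) * (1 - δ⁻¹)⁻¹ := by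
            rw [tsum_geometric_of_lt_one hi0 hi1]
    have h3 : (2 * M * (δ⁻¹) ^ N) * (1 - δ⁻¹)⁻¹ = (2 * M / (1 - δ⁻¹)) * (δ ^ N)⁻¹ := by
      rw [inv_pow]; ring
    linarith [h1, h2.le, h2.ge]
  linarith [habs, hsplit.le, hheadsum, htailsum]

set_option maxHeartbeats 1000000 in
/-- Let `(B,d)` be a metric space of finite diameter, `u : B → ℝ` Lipschitz with constant `c₁`,
`0 < θ ≤ 1`, and `Λ : B → B` a `θ`-Hölder map with constant `c₂`. Let `δ > 1` and
`v x := ∑_{n=0}^∞ δ^{-n} u (Λⁿ x)`. Then there are `γ > 0` and `c > 0` such that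
`|v x - v y| ≤ c * (log* (dist x y))^{-γ}` for all `x, y`, where `log* t = 1 + |log t|`. -/
theorem stmt0 {B : Type*} [MetricSpace B]
    (hB : Bornology.IsBounded (Set.univ : Set B))
    (u : B → ℝ) (c₁ : ℝ) (hu : ∀ x y : B, |u x - u y| ≤ c₁ * dist x y)
    (θ : ℝ) (hθ0 : 0 < θ) (hθ1 : θ ≤ 1)
    (Λ : B → B) (c₂ : ℝ) (hΛ : ∀ x y : B, dist (Λ x) (Λ y) ≤ c₂ * dist x y ^ θ)
    (δ : ℝ) (hδ : 1 < δ)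
    (v : B → ℝ) (hv : ∀ x : B, v x = ∑' n : ℕ, (δ ^ n)⁻¹ * u (Λ^[n] x)) :
    ∃ γ > (0 : ℝ), ∃ c > (0 : ℝ), ∀ x y : B,
      |v x - v y| ≤ c * (1 + |Real.log (dist x y)|) ^ (-γ) := by
  rcases isEmpty_or_nonempty B with hE | hNE
  · exact ⟨1, one_pos, 1, one_pos, fun x y => (hE.false x).elim⟩
  obtain ⟨D, hD⟩ := Metric.isBounded_iff.mp hB
  have hDb : ∀ x y : B, dist x y ≤ D := fun x y => hD (Set.mem_univ x) (Set.mem_univ y)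
  have hδ0 : (0:ℝ) < δ := by linarith
  have hi1 : δ⁻¹ < 1 := inv_lt_one_of_one_lt₀ hδ
  have hi0 : (0:ℝ) ≤ δ⁻¹ := by positivity
  obtain ⟨c₁', hc₁'0, hc₁'ge, hu'⟩ :
      ∃ c₁' : ℝ, 0 ≤ c₁' ∧ c₁ ≤ c₁' ∧ ∀ x y : B, |u x - u y| ≤ c₁' * dist x y :=
    ⟨max c₁ 0, le_max_right _ _, le_max_left _ _, fun x y =>
      (hu x y).trans (mul_le_mul_of_nonneg_right (le_max_left _ _) dist_nonneg)⟩
  obtain ⟨K, hK1, hΛ'⟩ :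
      ∃ K : ℝ, 1 ≤ K ∧ ∀ x y : B, dist (Λ x) (Λ y) ≤ K * dist x y ^ θ :=
    ⟨max c₂ 1, le_max_right _ _, fun x y =>
      (hΛ x y).trans (mul_le_mul_of_nonneg_right (le_max_left _ _)
        (Real.rpow_nonneg dist_nonneg _))⟩
  obtain ⟨x₀⟩ := hNE
  obtain ⟨M, hM0, hM⟩ : ∃ M : ℝ, 0 < M ∧ ∀ z : B, |u z| ≤ M := by
    refine ⟨|u x₀| + c₁' * max D 0 + 1, by positivity, fun z => ?_⟩
    have h1 : |u z| - |u x₀| ≤ |u z - u x₀| := abs_sub_abs_le_abs_sub _ _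
    have h2 : |u z - u x₀| ≤ c₁' * dist z x₀ := hu' z x₀
    have h3 : c₁' * dist z x₀ ≤ c₁' * max D 0 :=
      mul_le_mul_of_nonneg_left ((hDb z x₀).trans (le_max_left _ _)) hc₁'0
    linarith
  obtain ⟨A, hA0, hAdef⟩ : ∃ A : ℝ, 0 < A ∧ A = 2 * M / (1 - δ⁻¹) :=
    ⟨_, div_pos (by linarith) (by linarith), rfl⟩
  obtain ⟨γ, hγ0, c0, hc00, hbnd⟩ := aux_real hθ0 hθ1 hK1 hδ hc₁'0 hA0
  obtain ⟨T, hT1, hTge⟩ : ∃ T : ℝ, 1 ≤ T ∧ ∀ x y : B, 1 + Real.log (dist x y) ≤ T := by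
    refine ⟨1 + Real.log (max D 1), by
      have : (0:ℝ) ≤ Real.log (max D 1) := Real.log_nonneg (le_max_right _ _)
      linarith, fun x y => ?_⟩
    have h1 : Real.log (dist x y) ≤ Real.log (max D 1) := by
      rcases le_or_gt (dist x y) 0 with h | h
      · have : Real.log (dist x y) ≤ 0 := by
          rcases lt_or_eq_of_le h with h' | h'
          · exact absurd h' (not_lt.mpr dist_nonneg)
          · rw [h']; simp
        exact this.trans (Real.log_nonneg (le_max_right _ _))
      · exact Real.log_le_log h ((hDb x y).trans (le_max_left _ _))
    linarith
  have hgeo : Summable (fun n : ℕ => (δ⁻¹) ^ n) := summable_geometric_of_lt_one hi0 hi1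
  have hsummand : ∀ z : B, Summable (fun n : ℕ => (δ ^ n)⁻¹ * u (Λ^[n] z)) := by
    intro z
    apply Summable.of_norm_bounded (hgeo.mul_left M)
    intro n
    rw [Real.norm_eq_abs, abs_mul, abs_inv, abs_pow, abs_of_pos hδ0]
    calc (δ ^ n)⁻¹ * |u (Λ^[n] z)| ≤ (δ ^ n)⁻¹ * M :=
          mul_le_mul_of_nonneg_left (hM _) (by positivity)
      _ = M * (δ⁻¹) ^ n := by rw [inv_pow]; ring
  refine ⟨γ, hγ0, max c0 (A * T ^ (γ:ℝ)), lt_of_lt_of_le hc00 (le_max_left _ _),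
    fun x y => ?_⟩
  have hTpos : (0:ℝ) < T ^ (γ:ℝ) := Real.rpow_pos_of_pos (by linarith) _
  -- difference as a tsum
  obtain ⟨w, hwdef, hvdiff⟩ : ∃ w : ℕ → ℝ,
      (w = fun n => (δ ^ n)⁻¹ * (u (Λ^[n] x) - u (Λ^[n] y))) ∧ v x - v y = ∑' n, w n := by
    refine ⟨_, rfl, ?_⟩
    rw [hv x, hv y, ← Summable.tsum_sub (hsummand x) (hsummand y)]
    congr 1; funext n; ring
  have hwb : ∀ n, |w n| ≤ 2 * M * (δ⁻¹) ^ n := by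
    intro n
    rw [hwdef, abs_mul, abs_inv, abs_pow, abs_of_pos hδ0]
    have h1 : |u (Λ^[n] x) - u (Λ^[n] y)| ≤ 2 * M := by
      calc |u (Λ^[n] x) - u (Λ^[n] y)| ≤ |u (Λ^[n] x)| + |u (Λ^[n] y)| := abs_sub _ _
        _ ≤ 2 * M := by linarith [hM (Λ^[n] x), hM (Λ^[n] y)]
    calc (δ ^ n)⁻¹ * |u (Λ^[n] x) - u (Λ^[n] y)| ≤ (δ ^ n)⁻¹ * (2 * M) :=
          mul_le_mul_of_nonneg_left h1 (by positivity)
      _ = 2 * M * (δ⁻¹) ^ n := by rw [inv_pow]; ring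
  have hbase : (0:ℝ) < 1 + |Real.log (dist x y)| := by positivity
  rcases eq_or_lt_of_le (dist_nonneg : (0:ℝ) ≤ dist x y) with h0 | hd0
  · -- x = y
    have hxy : x = y := dist_le_zero.mp h0.ge
    rw [hxy, sub_self, abs_zero]
    have : (0:ℝ) ≤ (1 + |Real.log (dist x y)|) ^ (-γ) := Real.rpow_nonneg hbase.le _
    have hc : (0:ℝ) < max c0 (A * T ^ (γ:ℝ)) := lt_of_lt_of_le hc00 (le_max_left _ _)
    positivity
  rcases le_or_gt (dist x y) 1 with hd1 | hd1
  · -- small distance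
    obtain ⟨N, hN⟩ := hbnd (dist x y) hd0 hd1
    have hiter := iter_bound hθ0 hθ1 hK1 hΛ' x y
    have hhead : ∀ n < N, |w n| ≤ c₁' * (K ^ N * dist x y ^ (θ ^ N)) := by
      intro n hn
      rw [hwdef, abs_mul, abs_inv, abs_pow, abs_of_pos hδ0]
      have h1 : (δ ^ n)⁻¹ ≤ 1 := inv_le_one_of_one_le₀ (one_le_pow₀ hδ.le)
      have h2 : |u (Λ^[n] x) - u (Λ^[n] y)| ≤ c₁' * dist (Λ^[n] x) (Λ^[n] y) := hu' _ _
      have h3 : dist (Λ^[n] x) (Λ^[n] y) ≤ K ^ n * dist x y ^ (θ ^ n) := hiter n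
      have h4 : (K:ℝ) ^ n ≤ K ^ N := pow_le_pow_right₀ hK1 hn.le
      have h5 : dist x y ^ (θ ^ n) ≤ dist x y ^ (θ ^ N) := by
        apply Real.rpow_le_rpow_of_exponent_ge hd0 hd1
        exact pow_le_pow_of_le_one hθ0.le hθ1 hn.le
      have h6 : (K:ℝ) ^ n * dist x y ^ (θ ^ n) ≤ K ^ N * dist x y ^ (θ ^ N) := by
        apply mul_le_mul h4 h5 (Real.rpow_nonneg dist_nonneg _) (by positivity)
      have h7 : (0:ℝ) ≤ (δ ^ n)⁻¹ := by positivity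
      calc (δ ^ n)⁻¹ * |u (Λ^[n] x) - u (Λ^[n] y)|
          ≤ 1 * (c₁' * (K ^ N * dist x y ^ (θ ^ N))) := by
            apply mul_le_mul h1 (h2.trans (mul_le_mul_of_nonneg_left (h3.trans h6) hc₁'0))
              (abs_nonneg _) one_pos.le
        _ = c₁' * (K ^ N * dist x y ^ (θ ^ N)) := one_mul _
    have hts := tsum_split hδ hM0.le w hwb N (c₁' * (K ^ N * dist x y ^ (θ ^ N))) hhead
    rw [← hvdiff] at hts
    have habs' : (1 : ℝ) - Real.log (dist x y) = 1 + |Real.log (dist x y)| := by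
      rw [abs_of_nonpos (Real.log_nonpos hd0.le hd1)]; ring
    have heq : (N:ℝ) * (c₁' * (K ^ N * dist x y ^ (θ ^ N))) + (2 * M / (1 - δ⁻¹)) * (δ ^ N)⁻¹
        = (N : ℝ) * c₁' * K ^ N * dist x y ^ (θ ^ N) + A * (δ ^ N)⁻¹ := by
      rw [hAdef]; ring
    have hrp : (0:ℝ) ≤ (1 + |Real.log (dist x y)|) ^ (-γ) := Real.rpow_nonneg hbase.le _
    have hfin : c0 * (1 + |Real.log (dist x y)|) ^ (-γ)
        ≤ max c0 (A * T ^ (γ:ℝ)) * (1 + |Real.log (dist x y)|) ^ (-γ) :=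
      mul_le_mul_of_nonneg_right (le_max_left _ _) hrp
    rw [habs'] at hN
    linarith [hts, heq.le, heq.ge, hN, hfin]
  · -- large distance
    have hts := tsum_split hδ hM0.le w hwb 0 0 (fun n hn => absurd hn (Nat.not_lt_zero n))
    rw [← hvdiff] at hts
    simp only [Nat.cast_zero, zero_mul, pow_zero, inv_one, mul_one, zero_add] at hts
    have hlabs : |Real.log (dist x y)| = Real.log (dist x y) :=
      abs_of_nonneg (Real.log_nonneg hd1.le)
    have hTle : 1 + |Real.log (dist x y)| ≤ T := by rw [hlabs]; exact hTge x y
    have hb1 : (0:ℝ) < (1 + |Real.log (dist x y)|) ^ (γ:ℝ) :=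
      Real.rpow_pos_of_pos hbase _
    have h2 : (1 + |Real.log (dist x y)|) ^ (γ:ℝ) ≤ T ^ (γ:ℝ) :=
      Real.rpow_le_rpow hbase.le hTle hγ0.le
    have hneg : (1 + |Real.log (dist x y)|) ^ (-γ) =
        ((1 + |Real.log (dist x y)|) ^ (γ:ℝ))⁻¹ := by
      rw [← Real.rpow_neg hbase.le]
    have hinv : (T ^ (γ:ℝ))⁻¹ ≤ ((1 + |Real.log (dist x y)|) ^ (γ:ℝ))⁻¹ :=
      inv_anti₀ hb1 h2
    have hAfin : A ≤ (A * T ^ (γ:ℝ)) * (1 + |Real.log (dist x y)|) ^ (-γ) := by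
      rw [hneg]
      calc A = (A * T ^ (γ:ℝ)) * (T ^ (γ:ℝ))⁻¹ := by
            field_simp
        _ ≤ (A * T ^ (γ:ℝ)) * ((1 + |Real.log (dist x y)|) ^ (γ:ℝ))⁻¹ :=
            mul_le_mul_of_nonneg_left hinv (by positivity)
    have hrp : (0:ℝ) ≤ (1 + |Real.log (dist x y)|) ^ (-γ) := Real.rpow_nonneg hbase.le _
    have hfin : (A * T ^ (γ:ℝ)) * (1 + |Real.log (dist x y)|) ^ (-γ)
        ≤ max c0 (A * T ^ (γ:ℝ)) * (1 + |Real.log (dist x y)|) ^ (-γ) :=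
      mul_le_mul_of_nonneg_right (le_max_right _ _) hrp
    calc |v x - v y| ≤ 2 * M / (1 - δ⁻¹) := hts
      _ = A := hAdef.symm
      _ ≤ _ := hAfin.trans hfin
end

section
/- Let (B,d) be a metric space of finite diameter, let u : B → ℝ be a Lipschitz function with Lipschitz constant c₁, let 0 < θ < 1 and let Λ : B → B be a map satisfying d(Λ(x),Λ(y)) ≤ c₂ · d(x,y)^θ for all x,y ∈ B. Let δ > 1, and define v(x) := ∑_{n=0}^∞ δ^{-n} u(Λⁿ(x)). Then, with the explicit exponent γ := log δ / (2·log(1/θ)), there exists a constant c > 0, depending only on c₁, c₂, θ, δ and the diameter of B, such that |v(x) − v(y)| ≤ c · (log*(d(x,y)))^{-γ} for all x, y ∈ B. -/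
set_option maxHeartbeats 1000000


open Real

private lemma abs_tsum_le_aux {f : ℕ → ℝ} (h : Summable f) : |∑' n, f n| ≤ ∑' n, |f n| := by
  have := norm_tsum_le_tsum_norm (f := f) (by simpa using h.abs)
  simpa using this

private lemma inv_le_mul_inv_aux {a b C : ℝ} (ha : 0 < a) (hb : 0 < b) (h : b ≤ C * a) :
    a⁻¹ ≤ C * b⁻¹ := by
  have h1 : a⁻¹ * b ≤ a⁻¹ * (C * a) := by
    exact mul_le_mul_of_nonneg_left h (by positivity)
  have h2 : a⁻¹ * (C * a) = C := by field_simp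
  have h3 : a⁻¹ * b ≤ C := by linarith
  have h4 : a⁻¹ = (a⁻¹ * b) * b⁻¹ := by field_simp
  rw [h4]
  exact mul_le_mul_of_nonneg_right h3 (by positivity)

/-- Same setting as before with `0 < θ < 1`: with the explicit exponent
`γ := log δ / (2 * log (1/θ))`, there is `c > 0` such that
`|v x - v y| ≤ c * (log* (dist x y))^{-γ}` for all `x, y`. -/
theorem stmt1 {B : Type*} [MetricSpace B]
    (hB : Bornology.IsBounded (Set.univ : Set B))
    (u : B → ℝ) (c₁ : ℝ) (hu : ∀ x y : B, |u x - u y| ≤ c₁ * dist x y)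
    (θ : ℝ) (hθ0 : 0 < θ) (hθ1 : θ < 1)
    (Λ : B → B) (c₂ : ℝ) (hΛ : ∀ x y : B, dist (Λ x) (Λ y) ≤ c₂ * dist x y ^ θ)
    (δ : ℝ) (hδ : 1 < δ)
    (v : B → ℝ) (hv : ∀ x : B, v x = ∑' n : ℕ, (δ ^ n)⁻¹ * u (Λ^[n] x)) :
    ∃ c > (0 : ℝ), ∀ x y : B,
      |v x - v y| ≤
        c * (1 + |Real.log (dist x y)|) ^ (-(Real.log δ / (2 * Real.log (1 / θ)))) := by
  by_cases hsing : ∀ x y : B, x = y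
  · refine ⟨1, one_pos, fun x y => ?_⟩
    have hxy : x = y := hsing x y
    subst hxy
    simp only [sub_self, abs_zero]
    positivity
  push_neg at hsing
  obtain ⟨x₀, y₀, hxy₀⟩ := hsing
  have hd₀ : 0 < dist x₀ y₀ := dist_pos.2 hxy₀
  have hc₁ : 0 ≤ c₁ := by
    have h := hu x₀ y₀
    nlinarith [abs_nonneg (u x₀ - u y₀)]
  have hc₂ : 0 ≤ c₂ := by
    have h := hΛ x₀ y₀
    have hp : 0 < dist x₀ y₀ ^ θ := Real.rpow_pos_of_pos hd₀ θ
    nlinarith [dist_nonneg (x := Λ x₀) (y := Λ y₀)]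
  have h1θ : 0 < 1 - θ := by linarith
  -- diameter bound
  obtain ⟨D₀, hD₀⟩ := Metric.isBounded_iff.1 hB
  set D : ℝ := max D₀ 1 with hDdef
  have hD1 : (1:ℝ) ≤ D := le_max_right _ _
  have hD0 : (0:ℝ) ≤ D := by linarith
  have hdist : ∀ x y : B, dist x y ≤ D :=
    fun x y => le_trans (hD₀ (Set.mem_univ x) (Set.mem_univ y)) (le_max_left _ _)
  -- Hölder iterate constant
  set K : ℝ := (max 1 c₂) ^ ((1:ℝ)/(1-θ)) with hKdef
  have hmax0 : (0:ℝ) ≤ max 1 c₂ := le_trans zero_le_one (le_max_left _ _)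
  have hK1 : (1:ℝ) ≤ K := by
    rw [hKdef]
    calc (1:ℝ) = 1 ^ ((1:ℝ)/(1-θ)) := (Real.one_rpow _).symm
    _ ≤ _ := Real.rpow_le_rpow zero_le_one (le_max_left _ _) (by positivity)
  have hK0 : (0:ℝ) < K := by linarith
  have hKpow : K ^ (1-θ) = max 1 c₂ := by
    rw [hKdef, ← Real.rpow_mul hmax0, one_div, inv_mul_cancel₀ (ne_of_gt h1θ), Real.rpow_one]
  have hc₂K : c₂ * K ^ θ ≤ K := by
    have h2 : c₂ ≤ K ^ (1-θ) := by rw [hKpow]; exact le_max_right _ _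
    calc c₂ * K ^ θ ≤ K ^ (1-θ) * K ^ θ :=
          mul_le_mul_of_nonneg_right h2 (Real.rpow_nonneg hK0.le _)
    _ = K := by rw [← Real.rpow_add hK0, sub_add_cancel, Real.rpow_one]
  have hiter : ∀ (n : ℕ) (x y : B),
      dist (Λ^[n] x) (Λ^[n] y) ≤ K * dist x y ^ ((θ ^ n : ℝ)) := by
    intro n
    induction n with
    | zero =>
      intro x y
      simpa using le_mul_of_one_le_left dist_nonneg hK1
    | succ n ih =>
      intro x y
      rw [Function.iterate_succ_apply', Function.iterate_succ_apply']
      have h1 : dist (Λ (Λ^[n] x)) (Λ (Λ^[n] y)) ≤ c₂ * dist (Λ^[n] x) (Λ^[n] y) ^ θ := hΛ _ _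
      have h2 : dist (Λ^[n] x) (Λ^[n] y) ^ θ ≤ (K * dist x y ^ ((θ ^ n : ℝ))) ^ θ :=
        Real.rpow_le_rpow dist_nonneg (ih x y) hθ0.le
      have h3 : (K * dist x y ^ ((θ ^ n : ℝ))) ^ θ
          = K ^ θ * dist x y ^ ((θ ^ (n+1) : ℝ)) := by
        rw [Real.mul_rpow hK0.le (Real.rpow_nonneg dist_nonneg _),
          ← Real.rpow_mul dist_nonneg, ← pow_succ]
      calc dist (Λ (Λ^[n] x)) (Λ (Λ^[n] y)) ≤ c₂ * (K * dist x y ^ ((θ ^ n : ℝ))) ^ θ := by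
            calc _ ≤ c₂ * dist (Λ^[n] x) (Λ^[n] y) ^ θ := h1
            _ ≤ _ := mul_le_mul_of_nonneg_left h2 hc₂
      _ = (c₂ * K ^ θ) * dist x y ^ ((θ ^ (n+1) : ℝ)) := by rw [h3]; ring
      _ ≤ K * dist x y ^ ((θ ^ (n+1) : ℝ)) :=
            mul_le_mul_of_nonneg_right hc₂K (Real.rpow_nonneg dist_nonneg _)
  -- summability setup
  have hδ0 : (0:ℝ) < δ := by linarith
  have hδi1 : δ⁻¹ < 1 := inv_lt_one_of_one_lt₀ hδ
  have hδi0 : (0:ℝ) ≤ δ⁻¹ := by positivity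
  set S : ℝ := (1 - δ⁻¹)⁻¹ with hSdef
  have hS0 : 0 < S := by
    have h : (0:ℝ) < 1 - δ⁻¹ := by linarith
    rw [hSdef]; positivity
  have hgeo : Summable (fun n : ℕ => (δ⁻¹) ^ n) := summable_geometric_of_lt_one hδi0 hδi1
  have hgeosum : ∑' n : ℕ, (δ⁻¹) ^ n = S := tsum_geometric_of_lt_one hδi0 hδi1
  set Mu : ℝ := |u x₀| + c₁ * D with hMudef
  have hMu0 : 0 ≤ Mu := by positivity
  have hMu : ∀ z : B, |u z| ≤ Mu := by
    intro z
    have h := hu z x₀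
    have h2 := hdist z x₀
    have h3 : c₁ * dist z x₀ ≤ c₁ * D := mul_le_mul_of_nonneg_left h2 hc₁
    calc |u z| = |(u z - u x₀) + u x₀| := by ring_nf
    _ ≤ |u z - u x₀| + |u x₀| := abs_add_le _ _
    _ ≤ Mu := by rw [hMudef]; linarith
  have hterm : ∀ (x : B) (n : ℕ), |(δ ^ n)⁻¹ * u (Λ^[n] x)| ≤ Mu * (δ⁻¹) ^ n := by
    intro x n
    rw [abs_mul, abs_inv, abs_pow, abs_of_pos hδ0, ← inv_pow]
    calc (δ⁻¹) ^ n * |u (Λ^[n] x)| ≤ (δ⁻¹) ^ n * Mu :=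
          mul_le_mul_of_nonneg_left (hMu _) (by positivity)
    _ = Mu * (δ⁻¹) ^ n := by ring
  have hsumm : ∀ x : B, Summable (fun n : ℕ => (δ ^ n)⁻¹ * u (Λ^[n] x)) := by
    intro x
    exact Summable.of_norm_bounded (hgeo.mul_left Mu) (fun n => by
      rw [Real.norm_eq_abs]; exact hterm x n)
  -- bound on |v|
  have hvbound : ∀ x y : B, |v x - v y| ≤ 2 * Mu * S := by
    intro x y
    have hx : |v x| ≤ Mu * S := by
      rw [hv x]
      calc |∑' n : ℕ, (δ ^ n)⁻¹ * u (Λ^[n] x)| ≤ ∑' n : ℕ, |(δ ^ n)⁻¹ * u (Λ^[n] x)| :=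
            abs_tsum_le_aux (hsumm x)
      _ ≤ ∑' n : ℕ, Mu * (δ⁻¹) ^ n :=
            Summable.tsum_le_tsum (hterm x) (hsumm x).abs (hgeo.mul_left Mu)
      _ = Mu * S := by rw [tsum_mul_left, hgeosum]
    have hy : |v y| ≤ Mu * S := by
      rw [hv y]
      calc |∑' n : ℕ, (δ ^ n)⁻¹ * u (Λ^[n] y)| ≤ ∑' n : ℕ, |(δ ^ n)⁻¹ * u (Λ^[n] y)| :=
            abs_tsum_le_aux (hsumm y)
      _ ≤ ∑' n : ℕ, Mu * (δ⁻¹) ^ n :=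
            Summable.tsum_le_tsum (hterm y) (hsumm y).abs (hgeo.mul_left Mu)
      _ = Mu * S := by rw [tsum_mul_left, hgeosum]
    calc |v x - v y| ≤ |v x| + |v y| := abs_sub _ _
    _ ≤ 2 * Mu * S := by linarith
  -- main estimate for any cutoff N, when dist ≤ 1
  have hvd : ∀ (x y : B) (N : ℕ), 0 < dist x y → dist x y ≤ 1 →
      |v x - v y| ≤ c₁ * S * (K * dist x y ^ ((θ ^ N : ℝ)) + D * (δ⁻¹) ^ N) := by
    intro x y N ht0 ht1
    set t : ℝ := dist x y with htdef
    set f : ℕ → ℝ := fun n => (δ⁻¹) ^ n * |u (Λ^[n] x) - u (Λ^[n] y)| with hfdef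
    have hf0 : ∀ n, 0 ≤ f n := fun n => by positivity
    have hfle : ∀ n, f n ≤ (δ⁻¹) ^ n * (2 * Mu) := by
      intro n
      have := hMu (Λ^[n] x)
      have := hMu (Λ^[n] y)
      have habs : |u (Λ^[n] x) - u (Λ^[n] y)| ≤ 2 * Mu := by
        calc |u (Λ^[n] x) - u (Λ^[n] y)| ≤ |u (Λ^[n] x)| + |u (Λ^[n] y)| := abs_sub _ _
        _ ≤ 2 * Mu := by linarith
      exact mul_le_mul_of_nonneg_left habs (by positivity)
    have hfsum : Summable f :=
      Summable.of_nonneg_of_le hf0 hfle (hgeo.mul_right (2 * Mu))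
    have step1 : |v x - v y| ≤ ∑' n, f n := by
      rw [hv x, hv y, ← Summable.tsum_sub (hsumm x) (hsumm y)]
      calc |∑' n : ℕ, ((δ ^ n)⁻¹ * u (Λ^[n] x) - (δ ^ n)⁻¹ * u (Λ^[n] y))|
          ≤ ∑' n : ℕ, |(δ ^ n)⁻¹ * u (Λ^[n] x) - (δ ^ n)⁻¹ * u (Λ^[n] y)| :=
            abs_tsum_le_aux ((hsumm x).sub (hsumm y))
      _ = ∑' n, f n := by
            apply tsum_congr
            intro n
            rw [hfdef]
            simp only [← mul_sub, abs_mul, abs_inv, abs_pow, abs_of_pos hδ0, ← inv_pow]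
    have step2 : ∑' n, f n = (∑ n ∈ Finset.range N, f n) + ∑' n, f (n + N) :=
      (Summable.sum_add_tsum_nat_add N hfsum).symm
    have hmono : ∀ n, n < N → t ^ ((θ ^ n : ℝ)) ≤ t ^ ((θ ^ N : ℝ)) := by
      intro n hn
      exact Real.rpow_le_rpow_of_exponent_ge ht0 ht1
        (pow_le_pow_of_le_one hθ0.le hθ1.le hn.le)
    have hhead : (∑ n ∈ Finset.range N, f n) ≤ c₁ * K * t ^ ((θ ^ N : ℝ)) * S := by
      have hle : ∀ n ∈ Finset.range N, f n ≤ (c₁ * K * t ^ ((θ ^ N : ℝ))) * (δ⁻¹) ^ n := by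
        intro n hn
        rw [Finset.mem_range] at hn
        have h1 : |u (Λ^[n] x) - u (Λ^[n] y)| ≤ c₁ * (K * t ^ ((θ ^ n : ℝ))) :=
          le_trans (hu _ _) (mul_le_mul_of_nonneg_left (hiter n x y) hc₁)
        have h2 : c₁ * (K * t ^ ((θ ^ n : ℝ))) ≤ c₁ * (K * t ^ ((θ ^ N : ℝ))) := by
          have := hmono n hn
          have hKt : K * t ^ ((θ ^ n : ℝ)) ≤ K * t ^ ((θ ^ N : ℝ)) :=
            mul_le_mul_of_nonneg_left this hK0.le
          exact mul_le_mul_of_nonneg_left hKt hc₁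
        calc f n ≤ (δ⁻¹) ^ n * (c₁ * (K * t ^ ((θ ^ N : ℝ)))) :=
              mul_le_mul_of_nonneg_left (le_trans h1 h2) (by positivity)
        _ = (c₁ * K * t ^ ((θ ^ N : ℝ))) * (δ⁻¹) ^ n := by ring
      calc (∑ n ∈ Finset.range N, f n)
          ≤ ∑ n ∈ Finset.range N, (c₁ * K * t ^ ((θ ^ N : ℝ))) * (δ⁻¹) ^ n :=
            Finset.sum_le_sum hle
      _ = (c₁ * K * t ^ ((θ ^ N : ℝ))) * ∑ n ∈ Finset.range N, (δ⁻¹) ^ n := by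
            rw [Finset.mul_sum]
      _ ≤ (c₁ * K * t ^ ((θ ^ N : ℝ))) * S := by
            apply mul_le_mul_of_nonneg_left _ (by positivity)
            rw [← hgeosum]
            exact Summable.sum_le_tsum (Finset.range N) (fun i _ => by positivity) hgeo
      _ = c₁ * K * t ^ ((θ ^ N : ℝ)) * S := rfl
    have htail : (∑' n, f (n + N)) ≤ c₁ * D * (δ⁻¹) ^ N * S := by
      have hle : ∀ n : ℕ, f (n + N) ≤ (c₁ * D * (δ⁻¹) ^ N) * (δ⁻¹) ^ n := by
        intro n
        have h1 : |u (Λ^[n + N] x) - u (Λ^[n + N] y)| ≤ c₁ * D :=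
          le_trans (hu _ _) (mul_le_mul_of_nonneg_left (hdist _ _) hc₁)
        calc f (n + N) ≤ (δ⁻¹) ^ (n + N) * (c₁ * D) :=
              mul_le_mul_of_nonneg_left h1 (by positivity)
        _ = (c₁ * D * (δ⁻¹) ^ N) * (δ⁻¹) ^ n := by rw [pow_add]; ring
      calc (∑' n, f (n + N)) ≤ ∑' n : ℕ, (c₁ * D * (δ⁻¹) ^ N) * (δ⁻¹) ^ n := by
            apply Summable.tsum_le_tsum hle (hfsum.comp_injective (add_left_injective N))
              (hgeo.mul_left _)
      _ = (c₁ * D * (δ⁻¹) ^ N) * S := by rw [tsum_mul_left, hgeosum]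
      _ = c₁ * D * (δ⁻¹) ^ N * S := rfl
    calc |v x - v y| ≤ ∑' n, f n := step1
    _ = (∑ n ∈ Finset.range N, f n) + ∑' n, f (n + N) := step2
    _ ≤ c₁ * K * t ^ ((θ ^ N : ℝ)) * S + c₁ * D * (δ⁻¹) ^ N * S := add_le_add hhead htail
    _ = c₁ * S * (K * t ^ ((θ ^ N : ℝ)) + D * (δ⁻¹) ^ N) := by ring
  -- exponent and constants
  set γ : ℝ := Real.log δ / (2 * Real.log (1 / θ)) with hγdef
  have hlogδ : 0 < Real.log δ := Real.log_pos hδ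
  have hlogθ : 0 < Real.log (1 / θ) := Real.log_pos (by rw [one_div]; exact (one_lt_inv₀ hθ0).2 hθ1)
  have hγ0 : 0 < γ := by rw [hγdef]; positivity
  set k : ℕ := ⌈γ⌉₊ with hkdef
  have hγk : γ ≤ (k : ℝ) := Nat.le_ceil γ
  set C₁ : ℝ := 2 ^ k * (Nat.factorial (2 * k) : ℝ) / θ ^ (2 * k) with hC₁def
  have hC₁0 : 0 < C₁ := by
    rw [hC₁def]
    have : (0:ℝ) < (Nat.factorial (2 * k) : ℝ) := by exact_mod_cast Nat.factorial_pos (2 * k)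
    positivity
  set A : ℝ := 2 + Real.log D with hAdef
  have hlogD : 0 ≤ Real.log D := Real.log_nonneg hD1
  have hA1 : (1:ℝ) ≤ A := by rw [hAdef]; linarith
  have hA0 : (0:ℝ) < A := by linarith
  set cbig : ℝ := 2 * Mu * S * A ^ γ with hcbigdef
  set cmain : ℝ := c₁ * S * (K * C₁ + D * 2 ^ (γ:ℝ)) with hcmaindef
  have hcbig0 : 0 ≤ cbig := by rw [hcbigdef]; positivity
  have hcmain0 : 0 ≤ cmain := by
    rw [hcmaindef]
    have h2γ : (0:ℝ) ≤ (2:ℝ) ^ (γ:ℝ) := Real.rpow_nonneg (by norm_num) _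
    have : (0:ℝ) ≤ K * C₁ + D * 2 ^ (γ:ℝ) := by positivity
    positivity
  refine ⟨cbig + cmain + 1, by linarith, fun x y => ?_⟩
  rcases eq_or_ne x y with rfl | hxy
  · simp only [sub_self, abs_zero, dist_self, Real.log_zero, abs_zero, add_zero,
      Real.one_rpow]
    linarith
  have ht0 : 0 < dist x y := dist_pos.2 hxy
  set t : ℝ := dist x y with htdef
  by_cases hcase : t ≤ Real.exp (-1)
  · -- small distance
    have ht1 : t ≤ 1 := le_trans hcase (by
      rw [← Real.exp_zero]; exact Real.exp_le_exp.2 (by norm_num))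
    set s : ℝ := -Real.log t with hsdef
    have hlogt : Real.log t ≤ -1 := by
      calc Real.log t ≤ Real.log (Real.exp (-1)) := Real.log_le_log ht0 hcase
      _ = -1 := Real.log_exp _
    have hs1 : 1 ≤ s := by rw [hsdef]; linarith
    have hs0 : 0 < s := by linarith
    have habs : |Real.log t| = s := by
      rw [hsdef, abs_of_nonpos (by linarith)]
    have hlogs0 : 0 ≤ Real.log s := Real.log_nonneg hs1
    set L : ℝ := Real.log s / (2 * Real.log (1 / θ)) with hLdef
    have hL0 : 0 ≤ L := by rw [hLdef]; positivity
    set N : ℕ := ⌈L⌉₊ with hNdef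
    have hLN : L ≤ (N : ℝ) := Nat.le_ceil L
    have hNL1 : (N : ℝ) ≤ L + 1 := (Nat.ceil_lt_add_one hL0).le
    -- Bound 1 : (δ⁻¹)^N ≤ 2^γ * ((1+s)^γ)⁻¹
    have hδLN : s ^ γ ≤ δ ^ (N : ℕ) := by
      have h1 : δ ^ (L : ℝ) ≤ δ ^ ((N : ℕ) : ℝ) :=
        Real.rpow_le_rpow_of_exponent_le hδ.le hLN
      have h2 : δ ^ (L : ℝ) = s ^ γ := by
        rw [Real.rpow_def_of_pos hδ0, Real.rpow_def_of_pos hs0]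
        congr 1
        rw [hLdef, hγdef]
        field_simp
      rw [← Real.rpow_natCast δ N, ← h2]
      exact h1
    have hB1 : (δ⁻¹) ^ N ≤ 2 ^ (γ:ℝ) * ((1 + s) ^ γ)⁻¹ := by
      have hsγ0 : 0 < s ^ γ := Real.rpow_pos_of_pos hs0 γ
      have h1s0 : 0 < 1 + s := by linarith
      have h1 : (1 + s) ^ γ ≤ 2 ^ (γ:ℝ) * s ^ γ := by
        rw [← Real.mul_rpow (by norm_num) hs0.le]
        exact Real.rpow_le_rpow (by linarith) (by linarith) hγ0.le
      have h2 : (s ^ γ)⁻¹ ≤ 2 ^ (γ:ℝ) * ((1 + s) ^ γ)⁻¹ :=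
        inv_le_mul_inv_aux hsγ0 (Real.rpow_pos_of_pos h1s0 γ) h1
      calc (δ⁻¹) ^ N = (δ ^ N)⁻¹ := by rw [inv_pow]
      _ ≤ (s ^ γ)⁻¹ := by
            apply inv_anti₀ hsγ0 hδLN
      _ ≤ _ := h2
    -- Bound 2 : t ^ (θ^N) ≤ C₁ * ((1+s)^γ)⁻¹
    have hθLs : θ * s ^ (-(1:ℝ)/2) ≤ (θ:ℝ) ^ (N:ℕ) := by
      have h1 : θ ^ ((L + 1 : ℝ)) ≤ θ ^ (((N:ℕ)) : ℝ) :=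
        Real.rpow_le_rpow_of_exponent_ge hθ0 hθ1.le hNL1
      have h2 : θ ^ ((L + 1 : ℝ)) = θ * s ^ (-(1:ℝ)/2) := by
        rw [Real.rpow_add hθ0, Real.rpow_one]
        rw [Real.rpow_def_of_pos hθ0, Real.rpow_def_of_pos hs0]
        rw [mul_comm]
        congr 2
        rw [hLdef]
        have hltheta : Real.log θ = -Real.log (1/θ) := by
          rw [one_div, Real.log_inv]; ring
        rw [hltheta]
        field_simp
      rw [← Real.rpow_natCast θ N, ← h2]
      exact h1
    have hB2 : t ^ ((θ ^ N : ℝ)) ≤ C₁ * ((1 + s) ^ γ)⁻¹ := by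
      have hss : s * s ^ (-(1:ℝ)/2) = s ^ ((1:ℝ)/2) := by
        nth_rewrite 1 [← Real.rpow_one s]
        rw [← Real.rpow_add hs0]
        norm_num
      have hstep : t ^ ((θ ^ N : ℝ)) ≤ Real.exp (-(θ * s ^ ((1:ℝ)/2))) := by
        rw [Real.rpow_def_of_pos ht0]
        apply Real.exp_le_exp.2
        have hlt : Real.log t = -s := by rw [hsdef]; ring
        rw [hlt]
        have hθN0 : (0:ℝ) < θ ^ N := by positivity
        have := mul_le_mul_of_nonneg_left hθLs hs0.le
        calc -s * θ ^ N = -(s * θ ^ N) := by ring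
        _ ≤ -(s * (θ * s ^ (-(1:ℝ)/2))) := by
              apply neg_le_neg
              exact mul_le_mul_of_nonneg_left hθLs hs0.le
        _ = -(θ * (s * s ^ (-(1:ℝ)/2))) := by ring
        _ = -(θ * s ^ ((1:ℝ)/2)) := by rw [hss]
      have hexp : (1 + s) ^ γ ≤ C₁ * Real.exp (θ * s ^ ((1:ℝ)/2)) := by
        have hsq : (s ^ ((1:ℝ)/2)) ^ (2 * k) = s ^ k := by
          rw [← Real.rpow_natCast (s ^ ((1:ℝ)/2)) (2*k), ← Real.rpow_mul hs0.le,
            ← Real.rpow_natCast s k]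
          congr 1
          push_cast
          ring
        have hfac : θ ^ (2*k) * s ^ k / (Nat.factorial (2*k) : ℝ) ≤ Real.exp (θ * s ^ ((1:ℝ)/2)) := by
          have h := Real.pow_div_factorial_le_exp (θ * s ^ ((1:ℝ)/2))
            (mul_nonneg hθ0.le (Real.rpow_nonneg hs0.le _)) (2*k)
          rw [mul_pow, hsq] at h
          exact h
        have h1 : (1 + s) ^ γ ≤ (1 + s) ^ (k : ℕ) := by
          rw [← Real.rpow_natCast (1+s) k]
          exact Real.rpow_le_rpow_of_exponent_le (by linarith) hγk
        have h2 : (1 + s) ^ (k:ℕ) ≤ (2*s) ^ (k:ℕ) :=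
          pow_le_pow_left₀ (by linarith) (by linarith) k
        have hfacpos : (0:ℝ) < (Nat.factorial (2*k) : ℝ) := by exact_mod_cast Nat.factorial_pos (2*k)
        have h3 : (2*s) ^ (k:ℕ) = C₁ * (θ ^ (2*k) * s ^ k / (Nat.factorial (2*k) : ℝ)) := by
          rw [hC₁def, mul_pow]
          field_simp
        calc (1 + s) ^ γ ≤ (2*s) ^ (k:ℕ) := le_trans h1 h2
        _ = C₁ * (θ ^ (2*k) * s ^ k / (Nat.factorial (2*k) : ℝ)) := h3
        _ ≤ C₁ * Real.exp (θ * s ^ ((1:ℝ)/2)) :=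
              mul_le_mul_of_nonneg_left hfac hC₁0.le
      calc t ^ ((θ ^ N : ℝ)) ≤ Real.exp (-(θ * s ^ ((1:ℝ)/2))) := hstep
      _ = (Real.exp (θ * s ^ ((1:ℝ)/2)))⁻¹ := by rw [Real.exp_neg]
      _ ≤ C₁ * ((1 + s) ^ γ)⁻¹ :=
            inv_le_mul_inv_aux (Real.exp_pos _) (Real.rpow_pos_of_pos (by linarith) γ) hexp
    -- combine
    have hmain := hvd x y N ht0 ht1
    have hrw : (1 + |Real.log t|) ^ (-γ) = ((1 + s) ^ γ)⁻¹ := by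
      rw [habs, Real.rpow_neg (by linarith)]
    calc |v x - v y| ≤ c₁ * S * (K * t ^ ((θ ^ N : ℝ)) + D * (δ⁻¹) ^ N) := hmain
    _ ≤ c₁ * S * (K * (C₁ * ((1 + s) ^ γ)⁻¹) + D * (2 ^ (γ:ℝ) * ((1 + s) ^ γ)⁻¹)) := by
          apply mul_le_mul_of_nonneg_left _ (by positivity)
          apply add_le_add
          · exact mul_le_mul_of_nonneg_left hB2 hK0.le
          · exact mul_le_mul_of_nonneg_left hB1 hD0
    _ = cmain * ((1 + s) ^ γ)⁻¹ := by rw [hcmaindef]; ring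
    _ ≤ (cbig + cmain + 1) * ((1 + s) ^ γ)⁻¹ := by
          apply mul_le_mul_of_nonneg_right (by linarith)
          positivity
    _ = (cbig + cmain + 1) * (1 + |Real.log t|) ^ (-γ) := by rw [hrw]
  · -- large distance
    push_neg at hcase
    have hsA : 1 + |Real.log t| ≤ A := by
      rcases le_or_gt t 1 with h | h
      · have h1 : -1 < Real.log t := by
          rw [← Real.log_exp (-1)]
          exact Real.log_lt_log (Real.exp_pos _) hcase
        have h2 : Real.log t ≤ 0 := Real.log_nonpos ht0.le h
        rw [abs_of_nonpos h2, hAdef]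
        linarith
      · have h2 : 0 ≤ Real.log t := Real.log_nonneg h.le
        rw [abs_of_nonneg h2, hAdef]
        have h3 : Real.log t ≤ Real.log D := Real.log_le_log ht0 (hdist x y)
        linarith
    have h1s0 : (0:ℝ) < 1 + |Real.log t| := by positivity
    have hApow : (1 + |Real.log t|) ^ γ ≤ A ^ γ :=
      Real.rpow_le_rpow h1s0.le hsA hγ0.le
    have hstep : 2 * Mu * S ≤ (cbig + cmain + 1) * (1 + |Real.log t|) ^ (-γ) := by
      rw [Real.rpow_neg h1s0.le]
      have h1 : 2 * Mu * S ≤ cbig * ((1 + |Real.log t|) ^ γ)⁻¹ := by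
        rw [hcbigdef]
        have h2 : (A ^ γ)⁻¹ ≤ ((1 + |Real.log t|) ^ γ)⁻¹ :=
          inv_anti₀ (Real.rpow_pos_of_pos h1s0 γ) hApow
        calc 2 * Mu * S = (2 * Mu * S * A ^ γ) * (A ^ γ)⁻¹ := by
              field_simp
        _ ≤ (2 * Mu * S * A ^ γ) * ((1 + |Real.log t|) ^ γ)⁻¹ :=
              mul_le_mul_of_nonneg_left h2 (by positivity)
      have h3 : (0:ℝ) ≤ ((1 + |Real.log t|) ^ γ)⁻¹ := by positivity
      calc 2 * Mu * S ≤ cbig * ((1 + |Real.log t|) ^ γ)⁻¹ := h1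
      _ ≤ (cbig + cmain + 1) * ((1 + |Real.log t|) ^ γ)⁻¹ :=
            mul_le_mul_of_nonneg_right (by linarith) h3
    exact le_trans (hvbound x y) hstep
end

section
/- Let (B,d) be a metric space, let u : B → ℝ be Lipschitz with Lipschitz constant c₁ ≤ 1 and oscillation sup u − inf u ≤ 1, let 0 < θ < 1 and c₂ ≥ 1, and let Λ : B → B satisfy d(Λ(x),Λ(y)) ≤ c₂ · d(x,y)^θ for all x,y. Let δ > 1 and define v(x) := ∑_{n=0}^∞ δ^{-n} u(Λⁿ(x)). Then there is a constant C₁ > 0, depending only on c₂, θ and δ, such that for all x, y ∈ B with ξ := d(x,y) ≤ 1 and every integer N ≥ 1, one has |v(x) − v(y)| ≤ C₁ · (ξ^{θᴺ} + δ^{-N}). -/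
open Real

set_option maxHeartbeats 2000000 in
/-- With `u` Lipschitz of constant `c₁ ≤ 1` and oscillation `≤ 1`, `Λ` a `θ`-Hölder map
(`0 < θ < 1`, `c₂ ≥ 1`), `δ > 1` and `v x := ∑ δ^{-n} u (Λⁿ x)`: there is `C₁ > 0` such that
for `ξ := dist x y ≤ 1` and every integer `N ≥ 1`,
`|v x - v y| ≤ C₁ * (ξ^(θ^N) + δ^{-N})`. -/
theorem stmt3 {B : Type*} [MetricSpace B]
    (u : B → ℝ) (c₁ : ℝ) (hc₁ : c₁ ≤ 1)
    (hu : ∀ x y : B, |u x - u y| ≤ c₁ * dist x y)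
    (hosc : ∀ x y : B, u x - u y ≤ 1)
    (θ : ℝ) (hθ0 : 0 < θ) (hθ1 : θ < 1)
    (c₂ : ℝ) (hc₂ : 1 ≤ c₂)
    (Λ : B → B) (hΛ : ∀ x y : B, dist (Λ x) (Λ y) ≤ c₂ * dist x y ^ θ)
    (δ : ℝ) (hδ : 1 < δ)
    (v : B → ℝ) (hv : ∀ x : B, v x = ∑' n : ℕ, (δ ^ n)⁻¹ * u (Λ^[n] x)) :
    ∃ C₁ > (0 : ℝ), ∀ x y : B, dist x y ≤ 1 → ∀ N : ℕ, 1 ≤ N →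
      |v x - v y| ≤ C₁ * (dist x y ^ (θ ^ N) + (δ ^ N)⁻¹) := by
  have hθ1' : 0 < 1 - θ := by linarith
  have hc₂0 : 0 < c₂ := lt_of_lt_of_le one_pos hc₂
  set M : ℝ := c₂ ^ ((1 - θ)⁻¹) with hM
  have hM1 : 1 ≤ M := Real.one_le_rpow hc₂ (by positivity)
  have hMpos : 0 < M := lt_of_lt_of_le one_pos hM1
  have hδ0 : 0 < δ := lt_trans one_pos hδ
  set r : ℝ := δ⁻¹ with hr
  have hr0 : 0 < r := by positivity
  have hr1 : r < 1 := by rw [hr]; exact inv_lt_one_of_one_lt₀ hδ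
  have hgeo : Summable (fun n : ℕ => r ^ n) := summable_geometric_of_lt_one hr0.le hr1
  have htsum_geo : ∑' n : ℕ, r ^ n = (1 - r)⁻¹ := tsum_geometric_of_lt_one hr0.le hr1
  have h1r : 0 < 1 - r := by linarith
  -- summability of the defining series
  have hsum : ∀ z : B, Summable (fun n : ℕ => r ^ n * u (Λ^[n] z)) := by
    intro z
    apply Summable.of_norm
    have : ∀ n : ℕ, ‖r ^ n * u (Λ^[n] z)‖ ≤ (|u z| + 1) * r ^ n := by
      intro n
      have h1 : |u (Λ^[n] z)| ≤ |u z| + 1 := by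
        have h2 := hosc (Λ^[n] z) z
        have h3 := hosc z (Λ^[n] z)
        rw [abs_le]; constructor <;> cases' abs_le.mp (le_refl |u z|) with ha hb <;> nlinarith [neg_abs_le (u z), le_abs_self (u z)]
      rw [norm_mul, norm_pow, Real.norm_eq_abs, Real.norm_eq_abs, abs_of_pos hr0]
      rw [mul_comm]
      exact mul_le_mul_of_nonneg_right h1 (by positivity)
    exact Summable.of_nonneg_of_le (fun n => norm_nonneg _) this (hgeo.mul_left _)
  have hvr : ∀ z : B, v z = ∑' n : ℕ, r ^ n * u (Λ^[n] z) := by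
    intro z; rw [hv z]
    congr 1; funext n; rw [hr, inv_pow]
  refine ⟨(M + 1) * (1 - r)⁻¹, by positivity, ?_⟩
  intro x y hxy N hN
  rcases eq_or_lt_of_le (dist_nonneg (x := x) (y := y)) with h0 | h0
  · have hxyeq : x = y := by rw [← dist_eq_zero]; exact h0.symm
    subst hxyeq
    simp only [sub_self, abs_zero]
    have : (0:ℝ) ≤ dist x x ^ (θ ^ N) := Real.rpow_nonneg dist_nonneg _
    positivity
  -- iterate Hölder bound
  set ξ : ℝ := dist x y with hξ
  have iter : ∀ n : ℕ, dist (Λ^[n] x) (Λ^[n] y) ≤ M * ξ ^ (θ ^ n) := by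
    intro n
    induction n with
    | zero =>
      simp only [Function.iterate_zero, id_eq, pow_zero, Real.rpow_one]
      nlinarith
    | succ n ih =>
      rw [Function.iterate_succ_apply', Function.iterate_succ_apply']
      calc dist (Λ (Λ^[n] x)) (Λ (Λ^[n] y)) ≤ c₂ * dist (Λ^[n] x) (Λ^[n] y) ^ θ :=
            hΛ _ _
        _ ≤ c₂ * (M * ξ ^ (θ ^ n)) ^ θ := by
            apply mul_le_mul_of_nonneg_left _ hc₂0.le
            exact Real.rpow_le_rpow dist_nonneg ih hθ0.le
        _ = M * ξ ^ (θ ^ (n + 1)) := by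
            have hMθ : c₂ * M ^ θ = M := by
              rw [hM, ← Real.rpow_mul hc₂0.le]
              nth_rewrite 1 [← Real.rpow_one c₂]
              rw [← Real.rpow_add hc₂0]
              congr 1
              field_simp
              ring
            rw [Real.mul_rpow hMpos.le (Real.rpow_nonneg h0.le _),
              ← Real.rpow_mul h0.le, ← pow_succ, ← mul_assoc, hMθ]
  have hΘpos : (0:ℝ) < θ ^ N := by positivity
  have hξΘ0 : 0 ≤ ξ ^ (θ ^ N) := Real.rpow_nonneg h0.le _
  have hξΘ1 : ξ ^ (θ ^ N) ≤ 1 := Real.rpow_le_one h0.le hxy hΘpos.le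
  -- termwise bound function
  set w : ℕ → ℝ := fun n => if n < N then M * ξ ^ (θ ^ N) else 1 with hw
  have hw0 : ∀ n, 0 ≤ w n := by
    intro n; rw [hw]; dsimp only
    split <;> positivity
  have hwM : ∀ n, w n ≤ M := by
    intro n; rw [hw]; dsimp only
    split
    · nlinarith
    · exact hM1
  have hgsum : Summable (fun n : ℕ => r ^ n * w n) := by
    apply Summable.of_nonneg_of_le (fun n => by positivity)
      (fun n => ?_) (hgeo.mul_left M)
    calc r ^ n * w n ≤ r ^ n * M :=
          mul_le_mul_of_nonneg_left (hwM n) (by positivity)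
      _ = M * r ^ n := mul_comm _ _
  -- term bound
  have hterm : ∀ n : ℕ, |r ^ n * u (Λ^[n] x) - r ^ n * u (Λ^[n] y)| ≤ r ^ n * w n := by
    intro n
    rw [← mul_sub, abs_mul, abs_of_pos (pow_pos hr0 n)]
    apply mul_le_mul_of_nonneg_left _ (by positivity)
    rw [hw]; dsimp only
    split
    · rename_i hnN
      calc |u (Λ^[n] x) - u (Λ^[n] y)| ≤ c₁ * dist (Λ^[n] x) (Λ^[n] y) := hu _ _
        _ ≤ dist (Λ^[n] x) (Λ^[n] y) := mul_le_of_le_one_left dist_nonneg hc₁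
        _ ≤ M * ξ ^ (θ ^ n) := iter n
        _ ≤ M * ξ ^ (θ ^ N) := by
            apply mul_le_mul_of_nonneg_left _ hMpos.le
            apply Real.rpow_le_rpow_of_exponent_ge h0 hxy
            exact pow_le_pow_of_le_one hθ0.le hθ1.le hnN.le
    · rw [abs_sub_le_iff]
      exact ⟨hosc _ _, hosc _ _⟩
  have hfx := hsum x
  have hfy := hsum y
  have hfsub : Summable (fun n : ℕ => r ^ n * u (Λ^[n] x) - r ^ n * u (Λ^[n] y)) :=
    hfx.sub hfy
  have key : |v x - v y| ≤ ∑' n : ℕ, r ^ n * w n := by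
    rw [hvr x, hvr y, ← hfx.tsum_sub hfy]
    calc |∑' n : ℕ, (r ^ n * u (Λ^[n] x) - r ^ n * u (Λ^[n] y))|
        ≤ ∑' n : ℕ, |r ^ n * u (Λ^[n] x) - r ^ n * u (Λ^[n] y)| := by
          have := norm_tsum_le_tsum_norm
            (f := fun n : ℕ => r ^ n * u (Λ^[n] x) - r ^ n * u (Λ^[n] y))
            (by simpa only [Real.norm_eq_abs] using hfsub.abs)
          simpa only [Real.norm_eq_abs] using this
      _ ≤ ∑' n : ℕ, r ^ n * w n := hfsub.abs.tsum_le_tsum hterm hgsum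
  -- split the sum
  have hsplit : ∑' n : ℕ, r ^ n * w n =
      (∑ i ∈ Finset.range N, r ^ i * w i) + ∑' n : ℕ, r ^ (n + N) * w (n + N) :=
    (hgsum.sum_add_tsum_nat_add N).symm
  have hpart1 : (∑ i ∈ Finset.range N, r ^ i * w i) ≤ M * ξ ^ (θ ^ N) * (1 - r)⁻¹ := by
    have : ∀ i ∈ Finset.range N, r ^ i * w i = (M * ξ ^ (θ ^ N)) * r ^ i := by
      intro i hi
      rw [hw]; dsimp only
      rw [if_pos (Finset.mem_range.mp hi)]; ring
    rw [Finset.sum_congr rfl this, ← Finset.mul_sum]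
    calc (M * ξ ^ (θ ^ N)) * ∑ i ∈ Finset.range N, r ^ i
        ≤ (M * ξ ^ (θ ^ N)) * ∑' n : ℕ, r ^ n := by
          apply mul_le_mul_of_nonneg_left _ (by positivity)
          exact hgeo.sum_le_tsum _ (fun n _ => by positivity)
      _ = M * ξ ^ (θ ^ N) * (1 - r)⁻¹ := by rw [htsum_geo]
  have hpart2 : ∑' n : ℕ, r ^ (n + N) * w (n + N) = r ^ N * (1 - r)⁻¹ := by
    have : ∀ n : ℕ, r ^ (n + N) * w (n + N) = r ^ N * r ^ n := by
      intro n
      rw [hw]; dsimp only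
      rw [if_neg (by omega), pow_add]; ring
    rw [tsum_congr this, tsum_mul_left, htsum_geo]
  have hrN : (δ ^ N)⁻¹ = r ^ N := by rw [hr, inv_pow]
  rw [hrN]
  have hrNpos : 0 < r ^ N := by positivity
  calc |v x - v y| ≤ ∑' n : ℕ, r ^ n * w n := key
    _ = (∑ i ∈ Finset.range N, r ^ i * w i) + ∑' n : ℕ, r ^ (n + N) * w (n + N) := hsplit
    _ ≤ M * ξ ^ (θ ^ N) * (1 - r)⁻¹ + r ^ N * (1 - r)⁻¹ := by
        rw [hpart2]; exact add_le_add_left hpart1 _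
    _ ≤ (M + 1) * (1 - r)⁻¹ * (ξ ^ (θ ^ N) + r ^ N) := by
        have h1 : M * ξ ^ (θ ^ N) * (1 - r)⁻¹ ≤ (M + 1) * (1 - r)⁻¹ * ξ ^ (θ ^ N) := by
          rw [show (M + 1) * (1 - r)⁻¹ * ξ ^ (θ ^ N) = (M+1) * ξ ^ (θ ^ N) * (1 - r)⁻¹ by ring]
          apply mul_le_mul_of_nonneg_right _ (by positivity)
          nlinarith
        have h2 : r ^ N * (1 - r)⁻¹ ≤ (M + 1) * (1 - r)⁻¹ * r ^ N := by
          rw [show (M + 1) * (1 - r)⁻¹ * r ^ N = (M+1) * r ^ N * (1 - r)⁻¹ by ring]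
          apply mul_le_mul_of_nonneg_right _ (by positivity)
          nlinarith
        nlinarith [h1, h2]
end
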